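/- arXiv:1907.02314 — 2 statements merged into one kernel-verified Lean document; each statement's English description precedes it below -/
import Mathlib

section
/- (Output shaping, integrated dissipation bound.) Under the hypotheses of the output-shaping dissipation identity (closed-loop boundary condition C·w_zt(1,t) = −K_i·(w_t(1,t) − p*) − K_p·w_tt(1,t) with K_i, K_p > 0, p* ∈ ℝ, and S_d(t) = S(t) + (K_i/2)·(w_t(1,t) − p*)²), for every T ≥ 0 one has ∫₀ᵀ ( b·∫₀¹ w_tt(z,t)² dz + K_p·w_tt(1,t)² ) dt = S_d(0) − S_d(T) ≤ S_d(0). -/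
/-! Differentiating the wave equation and the clamped boundary condition in time, the velocity
`w_t` solves the same damped wave equation and vanishes at `z = 0`. Multiplying by `w_tt` and
integrating by parts in `z` gives the power balance `Ṡ = C w_zt(1,t) w_tt(1,t) − b ∫₀¹ w_tt²`, and the
closed-loop law turns the boundary flux into `−K_p w_tt(1,t)²` minus the derivative of the lumped
storage `(K_i/2)(w_t(1,t) − p*)²`. Integrating over `[0,T]`, with Fubini in place of
differentiation under the integral sign, gives the identity; `S_d(T) ≥ 0` gives the bound. -/

open MeasureTheory intervalIntegral Set Function

theorem HasDerivAt.eq_of_eqOn_Ici {F : Type*} [NormedAddCommGroup F] [NormedSpace ℝ F]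
    {f g : ℝ → F} {f' g' : F} {a t : ℝ} (hf : HasDerivAt f f' t) (hg : HasDerivAt g g' t)
    (hfg : EqOn f g (Ici a)) (ht : a ≤ t) : f' = g' :=
  (uniqueDiffWithinAt_Ici t).eq_deriv _ hf.hasDerivWithinAt <|
    hg.hasDerivWithinAt.congr_of_mem (fun _ hx => hfg (ht.trans hx)) self_mem_Ici

theorem integral_integral_eq_sub_of_hasDerivAt {e q : ℝ → ℝ → ℝ} {a b c d : ℝ}
    (he : ∀ z ∈ uIcc c d, ∀ t ∈ uIcc a b, HasDerivAt (e z ·) (q z t) t)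
    (he_cont : ∀ t, Continuous (e · t)) (hq : Continuous (uncurry q)) :
    ∫ t in a..b, ∫ z in c..d, q z t = (∫ z in c..d, e z b) - ∫ z in c..d, e z a := by
  have hq_int : IntegrableOn (uncurry fun t z => q z t) (uIoc a b ×ˢ uIoc c d) :=
    ((hq.comp continuous_swap).continuousOn.integrableOn_compact
      (isCompact_uIcc.prod isCompact_uIcc)).mono_set
      (prod_mono uIoc_subset_uIcc uIoc_subset_uIcc)
  rw [intervalIntegral_intervalIntegral_swap hq_int,
    ← intervalIntegral.integral_sub ((he_cont b).intervalIntegrable c d)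
      ((he_cont a).intervalIntegrable c d)]
  refine integral_congr fun z hz => integral_eq_sub_of_hasDerivAt (he z hz) ?_
  exact (hq.comp (Continuous.prodMk_right z)).intervalIntegrable a b

theorem integral_eq_sub_of_power_balance {e q : ℝ → ℝ → ℝ} {β β' D : ℝ → ℝ} {a b c d : ℝ}
    (hab : a ≤ b) (he : ∀ z ∈ uIcc c d, ∀ t ∈ uIcc a b, HasDerivAt (e z ·) (q z t) t)
    (he_cont : ∀ t, Continuous (e · t)) (hq : Continuous (uncurry q))
    (hβ : ∀ t ∈ uIcc a b, HasDerivAt β (β' t) t) (hβ' : Continuous β')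
    (hD : ∀ t ∈ Icc a b, D t = -((∫ z in c..d, q z t) + β' t)) :
    ∫ t in a..b, D t = ((∫ z in c..d, e z a) + β a) - ((∫ z in c..d, e z b) + β b) := by
  have hP : Continuous fun t => ∫ z in c..d, q z t :=
    continuous_parametric_intervalIntegral_of_continuous' (f := fun t z => q z t)
      (hq.comp continuous_swap) c d
  calc ∫ t in a..b, D t = -((∫ t in a..b, ∫ z in c..d, q z t) + ∫ t in a..b, β' t) := by
        rw [← intervalIntegral.integral_add (hP.intervalIntegrable a b)
          (hβ'.intervalIntegrable a b), ← intervalIntegral.integral_neg]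
        exact integral_congr fun t ht => hD t (uIcc_of_le hab ▸ ht)
    _ = _ := by
        rw [integral_integral_eq_sub_of_hasDerivAt he he_cont hq,
          integral_eq_sub_of_hasDerivAt hβ (hβ'.intervalIntegrable a b)]
        ring

theorem integral_power_eq_flux_sub_damping {ρ C β a b : ℝ} {u u' v v' vt : ℝ → ℝ}
    (hu : ∀ z ∈ uIcc a b, HasDerivAt u (u' z) z) (hv : ∀ z ∈ uIcc a b, HasDerivAt v (v' z) z)
    (hu' : ContinuousOn u' (uIcc a b)) (hv' : ContinuousOn v' (uIcc a b)) (hva : v a = 0)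
    (hwave : ∀ z ∈ uIcc a b, ρ * vt z = C * u' z - β * v z) :
    ∫ z in a..b, (C * u z * v' z + ρ * v z * vt z) = C * u b * v b - β * ∫ z in a..b, v z ^ 2 := by
  have hu_cont : ContinuousOn u (uIcc a b) := fun z hz =>
    (hu z hz).continuousAt.continuousWithinAt
  have hv_cont : ContinuousOn v (uIcc a b) := fun z hz =>
    (hv z hz).continuousAt.continuousWithinAt
  calc ∫ z in a..b, (C * u z * v' z + ρ * v z * vt z)
      = ∫ z in a..b, (C * (u' z * v z + u z * v' z) - β * v z ^ 2) :=
        integral_congr fun z hz => by linear_combination v z * hwave z hz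
    _ = C * (∫ z in a..b, (u' z * v z + u z * v' z)) - β * ∫ z in a..b, v z ^ 2 := by
        rw [intervalIntegral.integral_sub, intervalIntegral.integral_const_mul,
          intervalIntegral.integral_const_mul]
        · exact (((hu'.mul hv_cont).add (hu_cont.mul hv')).const_smul C).intervalIntegrable
        · exact ((hv_cont.pow 2).const_smul β).intervalIntegrable
    _ = C * u b * v b - β * ∫ z in a..b, v z ^ 2 := by
        rw [intervalIntegral.integral_deriv_mul_eq_sub hu hv hu'.intervalIntegrable
          hv'.intervalIntegrable, hva]
        ring

theorem output_shaping_integrated_general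
    (ρ C b : ℝ) (hρ : 0 < ρ) (hC : 0 < C)
    (w wt wzz wzt wtt : ℝ → ℝ → ℝ)
    (hwt : ∀ z t : ℝ, HasDerivAt (fun τ => w z τ) (wt z t) t)
    (hwtt : ∀ z t : ℝ, HasDerivAt (fun τ => wt z τ) (wtt z t) t)
    (hwtc : Continuous (Function.uncurry wt))
    (hwztc : Continuous (Function.uncurry wzt))
    (hwttc : Continuous (Function.uncurry wtt))
    (hpde : ∀ z ∈ Set.Icc (0:ℝ) 1, ∀ t : ℝ, 0 ≤ t →
      ρ * wtt z t = C * wzz z t - b * wt z t)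
    (hclamp : ∀ t : ℝ, 0 ≤ t → w 0 t = 0)
    (wzzt wztt wttt : ℝ → ℝ → ℝ)
    (hwzzt : ∀ z t : ℝ, HasDerivAt (fun τ => wzz z τ) (wzzt z t) t)
    (hwzzt' : ∀ z t : ℝ, HasDerivAt (fun ζ => wzt ζ t) (wzzt z t) z)
    (hwztt : ∀ z t : ℝ, HasDerivAt (fun τ => wzt z τ) (wztt z t) t)
    (hwztt' : ∀ z t : ℝ, HasDerivAt (fun ζ => wtt ζ t) (wztt z t) z)
    (hwttt : ∀ z t : ℝ, HasDerivAt (fun τ => wtt z τ) (wttt z t) t)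
    (hwzztc : Continuous (Function.uncurry wzzt))
    (hwzttc : Continuous (Function.uncurry wztt))
    (hwtttc : Continuous (Function.uncurry wttt))
    (Ki Kp pstar : ℝ) (hKi : 0 < Ki)
    (hcl : ∀ t : ℝ, 0 ≤ t →
      C * wzt 1 t = -Ki * (wt 1 t - pstar) - Kp * wtt 1 t) :
    ∀ T : ℝ, 0 ≤ T →
      (∫ t in (0:ℝ)..T,
          (b * (∫ z in (0:ℝ)..1, (wtt z t)^2) + Kp * (wtt 1 t)^2))
          = ((1/2) * (∫ z in (0:ℝ)..1, (C * (wzt z (0:ℝ))^2 + ρ * (wtt z (0:ℝ))^2)) + Ki/2 * (wt 1 (0:ℝ) - pstar)^2) - ((1/2) * (∫ z in (0:ℝ)..1, (C * (wzt z T)^2 + ρ * (wtt z T)^2)) + Ki/2 * (wt 1 T - pstar)^2) ∧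
        ((1/2) * (∫ z in (0:ℝ)..1, (C * (wzt z (0:ℝ))^2 + ρ * (wtt z (0:ℝ))^2)) + Ki/2 * (wt 1 (0:ℝ) - pstar)^2) - ((1/2) * (∫ z in (0:ℝ)..1, (C * (wzt z T)^2 + ρ * (wtt z T)^2)) + Ki/2 * (wt 1 T - pstar)^2) ≤ ((1/2) * (∫ z in (0:ℝ)..1, (C * (wzt z (0:ℝ))^2 + ρ * (wtt z (0:ℝ))^2)) + Ki/2 * (wt 1 (0:ℝ) - pstar)^2) := by
  intro T hT
  have hwt0 : ∀ t, 0 ≤ t → wt 0 t = 0 := fun t ht =>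
    (hwt 0 t).eq_of_eqOn_Ici (hasDerivAt_const t 0) (fun τ hτ => hclamp τ hτ) ht
  have hwtt0 : ∀ t, 0 ≤ t → wtt 0 t = 0 := fun t ht =>
    (hwtt 0 t).eq_of_eqOn_Ici (hasDerivAt_const t 0) (fun τ hτ => hwt0 τ hτ) ht
  have hwave : ∀ t, 0 ≤ t → ∀ z ∈ uIcc (0:ℝ) 1,
      ρ * wttt z t = C * wzzt z t - b * wtt z t :=
    fun t ht z hz => ((hwttt z t).const_mul ρ).eq_of_eqOn_Ici
      (((hwzzt z t).const_mul C).sub ((hwtt z t).const_mul b))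
      (fun τ hτ => hpde z (by rwa [uIcc_of_le zero_le_one] at hz) τ hτ) ht
  have hpower : ∀ t ∈ Icc (0:ℝ) T, b * (∫ z in (0:ℝ)..1, wtt z t ^ 2) + Kp * wtt 1 t ^ 2 =
      -((∫ z in (0:ℝ)..1, (C * wzt z t * wztt z t + ρ * wtt z t * wttt z t))
        + Ki * (wt 1 t - pstar) * wtt 1 t) := fun t ht => by
    rw [integral_power_eq_flux_sub_damping (fun z _ => hwzzt' z t) (fun z _ => hwztt' z t)
      (by fun_prop) (by fun_prop) (hwtt0 t ht.1) (hwave t ht.1)]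
    linear_combination wtt 1 t * hcl t ht.1
  simp only [← intervalIntegral.integral_const_mul (1/2 : ℝ)]
  refine ⟨integral_eq_sub_of_power_balance
    (e := fun z t => 1 / 2 * (C * wzt z t ^ 2 + ρ * wtt z t ^ 2))
    (β := fun t => Ki / 2 * (wt 1 t - pstar) ^ 2) hT (fun z _ t _ => ?_) (fun t => by fun_prop)
    (by fun_prop) (fun t _ => ?_) (by fun_prop) hpower, sub_le_self _ ?_⟩
  · exact ((((hwztt z t).pow 2).const_mul C).add (((hwttt z t).pow 2).const_mul ρ)).const_mul
      (1 / 2) |>.congr_deriv (by ring)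
  · exact (((hwtt 1 t).sub_const pstar).pow 2).const_mul (Ki / 2) |>.congr_deriv (by ring)
  · have hE : 0 ≤ ∫ z in (0:ℝ)..1, 1 / 2 * (C * wzt z T ^ 2 + ρ * wtt z T ^ 2) :=
      intervalIntegral.integral_nonneg zero_le_one fun z _ => by positivity
    positivity

/-- Output shaping, integrated dissipation bound:
∫₀ᵀ (b·∫₀¹ w_tt² dz + K_p·w_tt(1,t)²) dt = S_d(0) − S_d(T) ≤ S_d(0). -/
theorem output_shaping_integrated
    (ρ C b : ℝ) (hρ : 0 < ρ) (hC : 0 < C) (hb : 0 < b)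
    (w wz wt wzz wzt wtt : ℝ → ℝ → ℝ)
    (hwz : ∀ z t : ℝ, HasDerivAt (fun ζ => w ζ t) (wz z t) z)
    (hwt : ∀ z t : ℝ, HasDerivAt (fun τ => w z τ) (wt z t) t)
    (hwzz : ∀ z t : ℝ, HasDerivAt (fun ζ => wz ζ t) (wzz z t) z)
    (hwzt : ∀ z t : ℝ, HasDerivAt (fun ζ => wt ζ t) (wzt z t) z)
    (hwzt' : ∀ z t : ℝ, HasDerivAt (fun τ => wz z τ) (wzt z t) t)
    (hwtt : ∀ z t : ℝ, HasDerivAt (fun τ => wt z τ) (wtt z t) t)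
    (hwzc : Continuous (Function.uncurry wz))
    (hwtc : Continuous (Function.uncurry wt))
    (hwzzc : Continuous (Function.uncurry wzz))
    (hwztc : Continuous (Function.uncurry wzt))
    (hwttc : Continuous (Function.uncurry wtt))
    (hpde : ∀ z ∈ Set.Icc (0:ℝ) 1, ∀ t : ℝ, 0 ≤ t →
      ρ * wtt z t = C * wzz z t - b * wt z t)
    (hclamp : ∀ t : ℝ, 0 ≤ t → w 0 t = 0)
    (wzzt wztt wttt : ℝ → ℝ → ℝ)
    (hwzzt : ∀ z t : ℝ, HasDerivAt (fun τ => wzz z τ) (wzzt z t) t)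
    (hwzzt' : ∀ z t : ℝ, HasDerivAt (fun ζ => wzt ζ t) (wzzt z t) z)
    (hwztt : ∀ z t : ℝ, HasDerivAt (fun τ => wzt z τ) (wztt z t) t)
    (hwztt' : ∀ z t : ℝ, HasDerivAt (fun ζ => wtt ζ t) (wztt z t) z)
    (hwttt : ∀ z t : ℝ, HasDerivAt (fun τ => wtt z τ) (wttt z t) t)
    (hwzztc : Continuous (Function.uncurry wzzt))
    (hwzttc : Continuous (Function.uncurry wztt))
    (hwtttc : Continuous (Function.uncurry wttt))
    (Ki Kp pstar : ℝ) (hKi : 0 < Ki) (hKp : 0 < Kp)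
    (hcl : ∀ t : ℝ, 0 ≤ t →
      C * wzt 1 t = -Ki * (wt 1 t - pstar) - Kp * wtt 1 t) :
    ∀ T : ℝ, 0 ≤ T →
      (∫ t in (0:ℝ)..T,
          (b * (∫ z in (0:ℝ)..1, (wtt z t)^2) + Kp * (wtt 1 t)^2))
          = ((1/2) * (∫ z in (0:ℝ)..1, (C * (wzt z (0:ℝ))^2 + ρ * (wtt z (0:ℝ))^2)) + Ki/2 * (wt 1 (0:ℝ) - pstar)^2) - ((1/2) * (∫ z in (0:ℝ)..1, (C * (wzt z T)^2 + ρ * (wtt z T)^2)) + Ki/2 * (wt 1 T - pstar)^2) ∧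
        ((1/2) * (∫ z in (0:ℝ)..1, (C * (wzt z (0:ℝ))^2 + ρ * (wtt z (0:ℝ))^2)) + Ki/2 * (wt 1 (0:ℝ) - pstar)^2) - ((1/2) * (∫ z in (0:ℝ)..1, (C * (wzt z T)^2 + ρ * (wtt z T)^2)) + Ki/2 * (wt 1 T - pstar)^2) ≤ ((1/2) * (∫ z in (0:ℝ)..1, (C * (wzt z (0:ℝ))^2 + ρ * (wtt z (0:ℝ))^2)) + Ki/2 * (wt 1 (0:ℝ) - pstar)^2) :=
  output_shaping_integrated_general ρ C b hρ hC w wt wzz wzt wtt hwt hwtt hwtc hwztc hwttc hpde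
    hclamp wzzt wztt wttt hwzzt hwzzt' hwztt hwztt' hwttt hwzztc hwzttc hwtttc Ki Kp pstar hKi hcl
end

section
/- (Input shaping, integrated dissipation bound.) Under the hypotheses of the input-shaping dissipation identity (C·w_z(1,t) = −γ·U(t), K_p·U'(t) = −K_i·(U(t) − U*) + γ·w_tt(1,t) with γ, K_i, K_p > 0, U* ∈ ℝ, and S_d(t) = S(t) + (K_i/2)·(U(t) − U*)²), for every T ≥ 0 one has ∫₀ᵀ ( b·∫₀¹ w_tt(z,t)² dz + K_p·U'(t)² ) dt = S_d(0) − S_d(T) ≤ S_d(0). -/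
open MeasureTheory intervalIntegral

/-!
Differentiating the viscously damped wave equation in time, multiplying by `w_tt` and integrating
by parts in `z` (the clamped end contributes nothing, since `w_tt(0,t) = 0`) shows that the
velocity storage `S` changes at the rate `C·w_zt(1,t)·w_tt(1,t) − b·∫₀¹ w_tt²`. Differentiating the
boundary condition gives `C·w_zt(1,t) = −γ·U'(t)`, and the control law turns the boundary power
into `−K_i (U − U*) U' − K_p U'²`, so `S_d' = −(b·∫₀¹ w_tt² + K_p·U'²)`. Integrating over `[0, T]`
gives the identity, and `S_d(T) ≥ 0` gives the bound.
-/

section Calculus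

variable {E : Type*} [NormedAddCommGroup E] [NormedSpace ℝ E]

/-- At `t ≥ a` the right derivative along `[t, ∞)` already determines the derivative. -/
theorem hasDerivAt_eq_of_eqOn_Ici {f g f' g' : ℝ → E} {a : ℝ}
    (hf : ∀ t, a ≤ t → HasDerivAt f (f' t) t) (hg : ∀ t, a ≤ t → HasDerivAt g (g' t) t)
    (hfg : ∀ t, a ≤ t → f t = g t) (t : ℝ) (ht : a ≤ t) : f' t = g' t := by
  have hfg_right : f =ᶠ[nhdsWithin t (Set.Ici t)] g :=
    eventually_nhdsWithin_of_forall fun s hs => hfg s (ht.trans hs)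
  exact (uniqueDiffWithinAt_Ici t).eq_deriv _
    ((hf t ht).hasDerivWithinAt.congr_of_eventuallyEq hfg_right.symm (hfg t ht).symm)
    (hg t ht).hasDerivWithinAt

theorem hasDerivAt_intervalIntegral_of_continuous [CompleteSpace E] {F F' : ℝ → ℝ → E}
    {a b : ℝ} (hF : ∀ z t, HasDerivAt (fun τ => F z τ) (F' z t) t)
    (hFc : Continuous (Function.uncurry F)) (hF'c : Continuous (Function.uncurry F')) (t : ℝ) :
    HasDerivAt (fun τ => ∫ z in a..b, F z τ) (∫ z in a..b, F' z t) t := by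
  obtain ⟨M, hM⟩ := (isCompact_uIcc.prod (isCompact_closedBall t 1)).exists_bound_of_continuousOn
    hF'c.continuousOn
  refine (hasDerivAt_integral_of_dominated_loc_of_deriv_le (bound := fun _ => M)
    (Metric.ball_mem_nhds t one_pos)
    (.of_forall fun τ => (hFc.uncurry_right τ).aestronglyMeasurable.restrict)
    ((hFc.uncurry_right t).intervalIntegrable a b)
    (hF'c.uncurry_right t).aestronglyMeasurable.restrict ?_ intervalIntegrable_const
    (.of_forall fun z _ τ _ => hF z τ)).2
  exact .of_forall fun z hz τ hτ =>
    hM (z, τ) ⟨Set.uIoc_subset_uIcc hz, Metric.ball_subset_closedBall hτ⟩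

theorem integral_eq_sub_of_hasDerivAt_neg [CompleteSpace E] {f D : ℝ → E} {a b : ℝ} (hab : a ≤ b)
    (hf : ∀ t ∈ Set.Icc a b, HasDerivAt f (-D t) t) (hD : IntervalIntegrable D volume a b) :
    ∫ t in a..b, D t = f a - f b := by
  have hf_neg : ∀ t ∈ Set.uIcc a b, HasDerivAt (-f) (D t) t := fun t ht => by
    simpa using (hf t (Set.uIcc_of_le hab ▸ ht)).neg
  rw [integral_eq_sub_of_hasDerivAt hf_neg hD, Pi.neg_apply, Pi.neg_apply, neg_sub_neg]

end Calculus

/-- Multiplying `ρ r = C p' − b q` by `q` and integrating by parts `∫ p' q = [p q] − ∫ p q'`. -/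
theorem integral_power_balance {C ρ b : ℝ} {p p' q q' r : ℝ → ℝ}
    (hp : ∀ z, HasDerivAt p (p' z) z) (hq : ∀ z, HasDerivAt q (q' z) z)
    (hp'c : Continuous p') (hq'c : Continuous q')
    (hpde : ∀ z ∈ Set.Icc (0:ℝ) 1, ρ * r z = C * p' z - b * q z) (hq0 : q 0 = 0) :
    ∫ z in (0:ℝ)..1, (C * p z * q' z + ρ * q z * r z)
      = C * p 1 * q 1 - b * ∫ z in (0:ℝ)..1, q z ^ 2 := by
  have hpc : Continuous p := continuous_iff_continuousAt.2 fun z => (hp z).continuousAt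
  have hqc : Continuous q := continuous_iff_continuousAt.2 fun z => (hq z).continuousAt
  calc ∫ z in (0:ℝ)..1, (C * p z * q' z + ρ * q z * r z)
      = ∫ z in (0:ℝ)..1, (C * (p' z * q z + p z * q' z) - b * q z ^ 2) := by
        refine integral_congr fun z hz => ?_
        rw [Set.uIcc_of_le zero_le_one] at hz
        linear_combination q z * hpde z hz
    _ = C * (∫ z in (0:ℝ)..1, (p' z * q z + p z * q' z)) - b * ∫ z in (0:ℝ)..1, q z ^ 2 := by
        rw [intervalIntegral.integral_sub ((by fun_prop : Continuous _).intervalIntegrable 0 1)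
          ((by fun_prop : Continuous _).intervalIntegrable 0 1),
          intervalIntegral.integral_const_mul, intervalIntegral.integral_const_mul]
    _ = C * p 1 * q 1 - b * ∫ z in (0:ℝ)..1, q z ^ 2 := by
        rw [integral_deriv_mul_eq_sub (fun z _ => hp z) (fun z _ => hq z)
          (hp'c.intervalIntegrable 0 1) (hq'c.intervalIntegrable 0 1), hq0]
        ring

noncomputable def velocityStorage (C ρ : ℝ) (wzt wtt : ℝ → ℝ → ℝ) (t : ℝ) : ℝ :=
  (1/2) * ∫ z in (0:ℝ)..1, (C * (wzt z t)^2 + ρ * (wtt z t)^2)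

noncomputable def closedLoopStorage (C ρ Ki Ustar : ℝ) (wzt wtt : ℝ → ℝ → ℝ) (U : ℝ → ℝ)
    (t : ℝ) : ℝ :=
  velocityStorage C ρ wzt wtt t + Ki/2 * (U t - Ustar)^2

theorem velocityStorage_nonneg {C ρ : ℝ} (hC : 0 ≤ C) (hρ : 0 ≤ ρ) (wzt wtt : ℝ → ℝ → ℝ)
    (t : ℝ) : 0 ≤ velocityStorage C ρ wzt wtt t :=
  mul_nonneg (by norm_num) (integral_nonneg zero_le_one fun z _ => by positivity)

theorem closedLoopStorage_nonneg {C ρ Ki : ℝ} (hC : 0 ≤ C) (hρ : 0 ≤ ρ) (hKi : 0 ≤ Ki)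
    (Ustar : ℝ) (wzt wtt : ℝ → ℝ → ℝ) (U : ℝ → ℝ) (t : ℝ) :
    0 ≤ closedLoopStorage C ρ Ki Ustar wzt wtt U t :=
  add_nonneg (velocityStorage_nonneg hC hρ wzt wtt t) (by positivity)

theorem hasDerivAt_velocityStorage {C ρ b t : ℝ} {wzt wtt wzzt wztt wttt : ℝ → ℝ → ℝ}
    (hwzzt' : ∀ z, HasDerivAt (fun ζ => wzt ζ t) (wzzt z t) z)
    (hwztt : ∀ z t, HasDerivAt (fun τ => wzt z τ) (wztt z t) t)
    (hwztt' : ∀ z, HasDerivAt (fun ζ => wtt ζ t) (wztt z t) z)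
    (hwttt : ∀ z t, HasDerivAt (fun τ => wtt z τ) (wttt z t) t)
    (hwztc : Continuous (Function.uncurry wzt)) (hwttc : Continuous (Function.uncurry wtt))
    (hwzztc : Continuous fun z => wzzt z t) (hwzttc : Continuous (Function.uncurry wztt))
    (hwtttc : Continuous (Function.uncurry wttt))
    (hpde : ∀ z ∈ Set.Icc (0:ℝ) 1, ρ * wttt z t = C * wzzt z t - b * wtt z t)
    (hwtt0 : wtt 0 t = 0) :
    HasDerivAt (velocityStorage C ρ wzt wtt)
      (C * wzt 1 t * wtt 1 t - b * ∫ z in (0:ℝ)..1, wtt z t ^ 2) t := by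
  have hF := hasDerivAt_intervalIntegral_of_continuous (a := 0) (b := 1)
    (F := fun z τ => C * wzt z τ ^ 2 + ρ * wtt z τ ^ 2)
    (F' := fun z τ => 2 * (C * wzt z τ * wztt z τ + ρ * wtt z τ * wttt z τ))
    (fun z τ => ((((hwztt z τ).pow 2).const_mul C).add
      (((hwttt z τ).pow 2).const_mul ρ)).congr_deriv (by push_cast; ring))
    ((continuous_const.fun_mul (hwztc.fun_pow 2)).fun_add
      (continuous_const.fun_mul (hwttc.fun_pow 2)))
    (continuous_const.fun_mul (((continuous_const.fun_mul hwztc).fun_mul hwzttc).fun_add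
      ((continuous_const.fun_mul hwttc).fun_mul hwtttc)))
    t
  have hbal := integral_power_balance (ρ := ρ) (r := fun z => wttt z t) hwzzt' hwztt' hwzztc
    (hwzttc.uncurry_right t) hpde hwtt0
  refine (hF.const_mul (1/2 : ℝ)).congr_deriv ?_
  rw [intervalIntegral.integral_const_mul, hbal]
  ring

theorem hasDerivAt_closedLoopStorage {C ρ b γ Ki Kp Ustar t N U't : ℝ}
    {wzt wtt : ℝ → ℝ → ℝ} {U : ℝ → ℝ}
    (hS : HasDerivAt (velocityStorage C ρ wzt wtt) (C * wzt 1 t * wtt 1 t - b * N) t)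
    (hU : HasDerivAt U U't t) (hbc : C * wzt 1 t = -γ * U't)
    (hlaw : Kp * U't = -Ki * (U t - Ustar) + γ * wtt 1 t) :
    HasDerivAt (closedLoopStorage C ρ Ki Ustar wzt wtt U) (-(b * N + Kp * U't ^ 2)) t :=
  (hS.add (((hU.sub_const Ustar).pow 2).const_mul (Ki/2))).congr_deriv
    (by push_cast; linear_combination wtt 1 t * hbc + U't * hlaw)

theorem input_shaping_integrated_general
    (ρ C b : ℝ) (hρ : 0 < ρ) (hC : 0 < C)
    (w wz wt wzz wzt wtt : ℝ → ℝ → ℝ)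
    (hwt : ∀ z t : ℝ, HasDerivAt (fun τ => w z τ) (wt z t) t)
    (hwzt' : ∀ z t : ℝ, HasDerivAt (fun τ => wz z τ) (wzt z t) t)
    (hwtt : ∀ z t : ℝ, HasDerivAt (fun τ => wt z τ) (wtt z t) t)
    (hwztc : Continuous (Function.uncurry wzt))
    (hwttc : Continuous (Function.uncurry wtt))
    (hpde : ∀ z ∈ Set.Icc (0:ℝ) 1, ∀ t : ℝ, 0 ≤ t →
      ρ * wtt z t = C * wzz z t - b * wt z t)
    (hclamp : ∀ t : ℝ, 0 ≤ t → w 0 t = 0)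
    (wzzt wztt wttt : ℝ → ℝ → ℝ)
    (hwzzt : ∀ z t : ℝ, HasDerivAt (fun τ => wzz z τ) (wzzt z t) t)
    (hwzzt' : ∀ z t : ℝ, HasDerivAt (fun ζ => wzt ζ t) (wzzt z t) z)
    (hwztt : ∀ z t : ℝ, HasDerivAt (fun τ => wzt z τ) (wztt z t) t)
    (hwztt' : ∀ z t : ℝ, HasDerivAt (fun ζ => wtt ζ t) (wztt z t) z)
    (hwttt : ∀ z t : ℝ, HasDerivAt (fun τ => wtt z τ) (wttt z t) t)
    (hwzztc : Continuous (Function.uncurry wzzt))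
    (hwzttc : Continuous (Function.uncurry wztt))
    (hwtttc : Continuous (Function.uncurry wttt))
    (γ Ki Kp Ustar : ℝ) (hKi : 0 < Ki)
    (U U' : ℝ → ℝ)
    (hU : ∀ t : ℝ, HasDerivAt U (U' t) t) (hU'c : Continuous U')
    (hbc : ∀ t : ℝ, 0 ≤ t → C * wz 1 t = -γ * U t)
    (hlaw : ∀ t : ℝ, 0 ≤ t → Kp * U' t = -Ki * (U t - Ustar) + γ * wtt 1 t) :
    ∀ T : ℝ, 0 ≤ T →
      (∫ t in (0:ℝ)..T,
          (b * (∫ z in (0:ℝ)..1, (wtt z t)^2) + Kp * (U' t)^2))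
          = ((1/2) * (∫ z in (0:ℝ)..1, (C * (wzt z (0:ℝ))^2 + ρ * (wtt z (0:ℝ))^2)) + Ki/2 * (U (0:ℝ) - Ustar)^2) - ((1/2) * (∫ z in (0:ℝ)..1, (C * (wzt z T)^2 + ρ * (wtt z T)^2)) + Ki/2 * (U T - Ustar)^2) ∧
        ((1/2) * (∫ z in (0:ℝ)..1, (C * (wzt z (0:ℝ))^2 + ρ * (wtt z (0:ℝ))^2)) + Ki/2 * (U (0:ℝ) - Ustar)^2) - ((1/2) * (∫ z in (0:ℝ)..1, (C * (wzt z T)^2 + ρ * (wtt z T)^2)) + Ki/2 * (U T - Ustar)^2) ≤ ((1/2) * (∫ z in (0:ℝ)..1, (C * (wzt z (0:ℝ))^2 + ρ * (wtt z (0:ℝ))^2)) + Ki/2 * (U (0:ℝ) - Ustar)^2) := by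
  intro T hT
  have hwt0 : ∀ t, 0 ≤ t → wt 0 t = 0 :=
    hasDerivAt_eq_of_eqOn_Ici (fun t _ => hwt 0 t) (fun t _ => hasDerivAt_const t 0) hclamp
  have hwtt0 : ∀ t, 0 ≤ t → wtt 0 t = 0 :=
    hasDerivAt_eq_of_eqOn_Ici (fun t _ => hwtt 0 t) (fun t _ => hasDerivAt_const t 0) hwt0
  have hbc_dt : ∀ t, 0 ≤ t → C * wzt 1 t = -γ * U' t :=
    hasDerivAt_eq_of_eqOn_Ici (fun t _ => (hwzt' 1 t).const_mul C)
      (fun t _ => (hU t).const_mul (-γ)) hbc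
  have hpde_dt : ∀ z ∈ Set.Icc (0:ℝ) 1, ∀ t, 0 ≤ t →
      ρ * wttt z t = C * wzzt z t - b * wtt z t := fun z hz =>
    hasDerivAt_eq_of_eqOn_Ici (fun t _ => (hwttt z t).const_mul ρ)
      (fun t _ => ((hwzzt z t).const_mul C).sub ((hwtt z t).const_mul b)) (hpde z hz)
  have hSd : ∀ t, 0 ≤ t → HasDerivAt (closedLoopStorage C ρ Ki Ustar wzt wtt U)
      (-(b * (∫ z in (0:ℝ)..1, (wtt z t)^2) + Kp * (U' t)^2)) t := fun t ht =>
    hasDerivAt_closedLoopStorage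
      (hasDerivAt_velocityStorage (hwzzt' · t) hwztt (hwztt' · t) hwttt hwztc hwttc
        (hwzztc.uncurry_right t) hwzttc hwtttc (fun z hz => hpde_dt z hz t ht) (hwtt0 t ht))
      (hU t) (hbc_dt t ht) (hlaw t ht)
  have hdiss : Continuous fun t => b * (∫ z in (0:ℝ)..1, (wtt z t)^2) + Kp * (U' t)^2 := by
    have := continuous_parametric_intervalIntegral_of_continuous' (μ := volume)
      (f := fun τ z => wtt z τ ^ 2) ((hwttc.comp continuous_swap).fun_pow 2) 0 1
    fun_prop
  have hbal := integral_eq_sub_of_hasDerivAt_neg hT (fun t ht => hSd t ht.1)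
    (hdiss.intervalIntegrable 0 T)
  exact ⟨hbal, sub_le_self _ (closedLoopStorage_nonneg hC.le hρ.le hKi.le Ustar wzt wtt U T)⟩

/-- Input shaping, integrated dissipation bound:
∫₀ᵀ (b·∫₀¹ w_tt² dz + K_p·U'(t)²) dt = S_d(0) − S_d(T) ≤ S_d(0). -/
theorem input_shaping_integrated
    (ρ C b : ℝ) (hρ : 0 < ρ) (hC : 0 < C) (hb : 0 < b)
    (w wz wt wzz wzt wtt : ℝ → ℝ → ℝ)
    (hwz : ∀ z t : ℝ, HasDerivAt (fun ζ => w ζ t) (wz z t) z)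
    (hwt : ∀ z t : ℝ, HasDerivAt (fun τ => w z τ) (wt z t) t)
    (hwzz : ∀ z t : ℝ, HasDerivAt (fun ζ => wz ζ t) (wzz z t) z)
    (hwzt : ∀ z t : ℝ, HasDerivAt (fun ζ => wt ζ t) (wzt z t) z)
    (hwzt' : ∀ z t : ℝ, HasDerivAt (fun τ => wz z τ) (wzt z t) t)
    (hwtt : ∀ z t : ℝ, HasDerivAt (fun τ => wt z τ) (wtt z t) t)
    (hwzc : Continuous (Function.uncurry wz))
    (hwtc : Continuous (Function.uncurry wt))
    (hwzzc : Continuous (Function.uncurry wzz))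
    (hwztc : Continuous (Function.uncurry wzt))
    (hwttc : Continuous (Function.uncurry wtt))
    (hpde : ∀ z ∈ Set.Icc (0:ℝ) 1, ∀ t : ℝ, 0 ≤ t →
      ρ * wtt z t = C * wzz z t - b * wt z t)
    (hclamp : ∀ t : ℝ, 0 ≤ t → w 0 t = 0)
    (wzzt wztt wttt : ℝ → ℝ → ℝ)
    (hwzzt : ∀ z t : ℝ, HasDerivAt (fun τ => wzz z τ) (wzzt z t) t)
    (hwzzt' : ∀ z t : ℝ, HasDerivAt (fun ζ => wzt ζ t) (wzzt z t) z)
    (hwztt : ∀ z t : ℝ, HasDerivAt (fun τ => wzt z τ) (wztt z t) t)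
    (hwztt' : ∀ z t : ℝ, HasDerivAt (fun ζ => wtt ζ t) (wztt z t) z)
    (hwttt : ∀ z t : ℝ, HasDerivAt (fun τ => wtt z τ) (wttt z t) t)
    (hwzztc : Continuous (Function.uncurry wzzt))
    (hwzttc : Continuous (Function.uncurry wztt))
    (hwtttc : Continuous (Function.uncurry wttt))
    (γ Ki Kp Ustar : ℝ) (hγ : 0 < γ) (hKi : 0 < Ki) (hKp : 0 < Kp)
    (U U' : ℝ → ℝ)
    (hU : ∀ t : ℝ, HasDerivAt U (U' t) t) (hU'c : Continuous U')
    (hbc : ∀ t : ℝ, 0 ≤ t → C * wz 1 t = -γ * U t)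
    (hlaw : ∀ t : ℝ, 0 ≤ t → Kp * U' t = -Ki * (U t - Ustar) + γ * wtt 1 t) :
    ∀ T : ℝ, 0 ≤ T →
      (∫ t in (0:ℝ)..T,
          (b * (∫ z in (0:ℝ)..1, (wtt z t)^2) + Kp * (U' t)^2))
          = ((1/2) * (∫ z in (0:ℝ)..1, (C * (wzt z (0:ℝ))^2 + ρ * (wtt z (0:ℝ))^2)) + Ki/2 * (U (0:ℝ) - Ustar)^2) - ((1/2) * (∫ z in (0:ℝ)..1, (C * (wzt z T)^2 + ρ * (wtt z T)^2)) + Ki/2 * (U T - Ustar)^2) ∧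
        ((1/2) * (∫ z in (0:ℝ)..1, (C * (wzt z (0:ℝ))^2 + ρ * (wtt z (0:ℝ))^2)) + Ki/2 * (U (0:ℝ) - Ustar)^2) - ((1/2) * (∫ z in (0:ℝ)..1, (C * (wzt z T)^2 + ρ * (wtt z T)^2)) + Ki/2 * (U T - Ustar)^2) ≤ ((1/2) * (∫ z in (0:ℝ)..1, (C * (wzt z (0:ℝ))^2 + ρ * (wtt z (0:ℝ))^2)) + Ki/2 * (U (0:ℝ) - Ustar)^2) :=
  input_shaping_integrated_general ρ C b hρ hC w wz wt wzz wzt wtt hwt hwzt' hwtt hwztc hwttc hpde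
    hclamp wzzt wztt wttt hwzzt hwzzt' hwztt hwztt' hwttt hwzztc hwzttc hwtttc γ Ki Kp Ustar hKi U
    U' hU hU'c hbc hlaw
end
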